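/- arXiv:1701.07112 — 2 statements merged into one kernel-verified Lean document; each statement's English description precedes it below -/
import Mathlib

section
/- Let W be a memoryless channel with input alphabet F_q and finite output alphabet Y, with transition probabilities W(y|x). Assume the input X is uniformly distributed on F_q. Define for each output y the posterior vector π_y(α) = W(y|α) / Σ_{β∈F_q} W(y|β), the Koetter-Vardy capacity C_KV = E_y[Σ_α π_y(α)^2], and the Bhattacharyya parameter B(W) = (1/(q(q-1)))·Σ_{x≠x'} Σ_y sqrt(W(y|x)·W(y|x')). Then C_KV ≥ 1 - (q-1)·B(W). -/
open Finset

/-! For a single output with unnormalised posterior weights `w` and total mass `S = ∑ w`,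
`S² = ∑ w_a² + ∑_{a≠b} w_a w_b` and `w_a w_b ≤ S √(w_a w_b)`, so
`S · ∑ (w_a / S)² = (∑ w_a²) / S ≥ S - ∑_{a≠b} √(w_a w_b)`.
Averaging over the outputs with weight `1/q` and using `∑_y ∑_x W(y|x) = q` gives the bound. -/

section

variable {α : Type*} [Fintype α] [DecidableEq α]

theorem sq_sum_eq_sum_sq_add_sum_offDiag {R : Type*} [CommSemiring R] (f : α → R) :
    (∑ a, f a) ^ 2 =
      ∑ a, f a ^ 2 + ∑ p ∈ univ.filter (fun p : α × α => p.1 ≠ p.2), f p.1 * f p.2 := by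
  rw [sq, sum_mul_sum, ← Fintype.sum_prod_type',
    ← sum_filter_add_sum_filter_not univ (fun p : α × α => p.1 = p.2)]
  congr 1
  rw [← univ_product_univ, ← diag_eq_filter, sum_diag]
  simp only [sq]

theorem mul_le_mul_sqrt_mul_of_le {a b S : ℝ} (ha : 0 ≤ a) (hb : 0 ≤ b) (haS : a ≤ S)
    (hbS : b ≤ S) :
    a * b ≤ S * √(a * b) := by
  have hsqrt : √(a * b) ≤ S :=
    Real.sqrt_le_iff.mpr ⟨ha.trans haS, by nlinarith⟩
  calc a * b = √(a * b) * √(a * b) := (Real.mul_self_sqrt (mul_nonneg ha hb)).symm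
    _ ≤ S * √(a * b) := by gcongr

theorem sum_sub_sum_offDiag_sqrt_le_sum_mul_sum_sq (w : α → ℝ) (hw : ∀ a, 0 ≤ w a) :
    (∑ a, w a) - ∑ p ∈ univ.filter (fun p : α × α => p.1 ≠ p.2), √(w p.1 * w p.2) ≤
      (∑ a, w a) * ∑ a, (w a / ∑ b, w b) ^ 2 := by
  set S := ∑ a, w a
  have hT : 0 ≤ ∑ p ∈ univ.filter (fun p : α × α => p.1 ≠ p.2), √(w p.1 * w p.2) :=
    sum_nonneg fun _ _ => Real.sqrt_nonneg _
  have hS0 : 0 ≤ S := sum_nonneg fun a _ => hw a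
  rcases hS0.eq_or_lt with hS | hS
  · rw [← hS, zero_mul]; linarith
  have hle : ∀ a, w a ≤ S := fun a => single_le_sum (fun b _ => hw b) (mem_univ a)
  have hoff : ∑ p ∈ univ.filter (fun p : α × α => p.1 ≠ p.2), w p.1 * w p.2 ≤
      S * ∑ p ∈ univ.filter (fun p : α × α => p.1 ≠ p.2), √(w p.1 * w p.2) := by
    rw [mul_sum]
    exact sum_le_sum fun p _ => mul_le_mul_sqrt_mul_of_le (hw _) (hw _) (hle _) (hle _)
  have hsq := sq_sum_eq_sum_sq_add_sum_offDiag w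
  simp only [div_pow, ← sum_div]
  rw [mul_div_assoc', le_div_iff₀ (by positivity)]
  nlinarith

end

theorem stmt_6_general {α β : Type*} [Fintype α] [Fintype β] [DecidableEq α]
    (q : ℕ) (hcard : Fintype.card α = q) (hq : 2 ≤ q)
    (W : α → β → ℝ) (hW0 : ∀ x y, 0 ≤ W x y) (hrow : ∀ x, ∑ y, W x y = 1)
    (CKV B : ℝ)
    (hCKV : CKV = ∑ y, ((∑ x, W x y) / (q : ℝ)) * ∑ a, (W a y / ∑ b, W b y) ^ 2)
    (hB : B = (1 / ((q : ℝ) * ((q : ℝ) - 1))) *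
      ∑ xx ∈ Finset.univ.filter (fun xx : α × α => xx.1 ≠ xx.2),
        ∑ y, Real.sqrt (W xx.1 y * W xx.2 y)) :
    CKV ≥ 1 - ((q : ℝ) - 1) * B := by
  have hq1 : (1 : ℝ) < q := by exact_mod_cast hq
  have htotal : ∑ y, ∑ x, W x y = q := by
    rw [sum_comm]; simp [hrow, hcard]
  have hqB : ((q : ℝ) - 1) * B = (∑ y, ∑ p ∈ univ.filter (fun p : α × α => p.1 ≠ p.2),
      √(W p.1 y * W p.2 y)) / q := by
    have : (q : ℝ) - 1 ≠ 0 := sub_ne_zero.mpr hq1.ne'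
    rw [hB, sum_comm]; field_simp
  calc 1 - ((q : ℝ) - 1) * B
      = (∑ y, ((∑ x, W x y) - ∑ p ∈ univ.filter (fun p : α × α => p.1 ≠ p.2),
          √(W p.1 y * W p.2 y))) / q := by
        rw [hqB, sum_sub_distrib, htotal]; field_simp
    _ ≤ (∑ y, (∑ x, W x y) * ∑ a, (W a y / ∑ b, W b y) ^ 2) / q := by
        gcongr with y
        exact sum_sub_sum_offDiag_sqrt_le_sum_mul_sum_sq (W · y) (hW0 · y)
    _ = CKV := by
        rw [hCKV, sum_div]; congr! 1 with y; ring

/-- `C_KV ≥ 1 - (q-1)·B(W)`: the Koetter-Vardy capacity of a `q`-ary input channel with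
uniformly distributed input is lower bounded in terms of its Bhattacharyya parameter.
Here `π_y(a) = W(y|a)/∑_b W(y|b)`, the output distribution is `y ↦ (∑_x W(y|x))/q`,
`C_KV = E_y[∑_a π_y(a)²]` and
`B(W) = (1/(q(q-1)))·∑_{x≠x'}∑_y sqrt(W(y|x)·W(y|x'))`. -/
theorem stmt_6 {α β : Type*} [Fintype α] [Fintype β] [DecidableEq α]
    (q : ℕ) (hcard : Fintype.card α = q) (hq : 2 ≤ q)
    (W : α → β → ℝ) (hW0 : ∀ x y, 0 ≤ W x y) (hrow : ∀ x, ∑ y, W x y = 1)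
    (hcol : ∀ y, 0 < ∑ x, W x y)
    (CKV B : ℝ)
    (hCKV : CKV = ∑ y, ((∑ x, W x y) / (q : ℝ)) * ∑ a, (W a y / ∑ b, W b y) ^ 2)
    (hB : B = (1 / ((q : ℝ) * ((q : ℝ) - 1))) *
      ∑ xx ∈ Finset.univ.filter (fun xx : α × α => xx.1 ≠ xx.2),
        ∑ y, Real.sqrt (W xx.1 y * W xx.2 y)) :
    CKV ≥ 1 - ((q : ℝ) - 1) * B :=
  stmt_6_general q hcard hq W hW0 hrow CKV B hCKV hB
end

section
/- Let W be a weakly symmetric discrete memoryless channel with input alphabet F_q and finite output alphabet Y, with uniformly distributed input. For each output y, let π_y(α) = W(y|α)/Σ_β W(y|β) be the posterior distribution. Then for every fixed input x ∈ F_q, E_{y∼W(·|x)}[π_y(x)] = E_{y∼W(·|x)}[Σ_{α∈F_q} π_y(α)^2]. -/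
open Finset

/-!
Group the outputs into the classes of the partition. On a class `B`, column symmetry makes the
column sums `s = ∑ₐ W(y|a)` and the column power sums `t = ∑ₐ W(y|a)²` constant, and row symmetry
makes the row sums `r = ∑_{y ∈ B} W(y|a)` and `R = ∑_{y ∈ B} W(y|a)²` independent of `a`. Counting
the entries of the block by rows and by columns gives `|B| s = q r` and `|B| t = q R`, hence
`R s = r t`, which is exactly the equality of the two expectations restricted to `B`:
`R / s = r · t / s²`.
-/

section WeaklySymmetricChannel

variable {α β : Type*}

theorem sum_comp_eq_of_column_perm [Fintype α] (W : α → β → ℝ) (f : ℝ → ℝ) {y y' : β}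
    {σ : α ≃ α} (hσ : ∀ a, W (σ a) y' = W a y) : ∑ a, f (W a y) = ∑ a, f (W a y') := by
  simp_rw [← hσ]
  exact Equiv.sum_comp σ fun a => f (W a y')

theorem sum_filter_comp_eq_of_row_perm {ι : Type*} [Fintype β] [DecidableEq ι] (W : α → β → ℝ)
    (f : ℝ → ℝ) (part : β → ι) {i : ι} {x x' : α} {σ : {y // part y = i} ≃ {y // part y = i}}
    (hσ : ∀ y, W x' (σ y) = W x y) :
    ∑ y with part y = i, f (W x' y) = ∑ y with part y = i, f (W x y) := by
  have hmem : ∀ y, y ∈ ({y | part y = i} : Finset β) ↔ part y = i := by simp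
  rw [sum_subtype (F := Subtype.fintype _) _ hmem, sum_subtype (F := Subtype.fintype _) _ hmem,
    ← Equiv.sum_comp σ]
  simp_rw [hσ]

theorem card_mul_eq_card_mul_of_sums_const [Fintype α] (g : α → β → ℝ) (B : Finset β) {c d : ℝ}
    (hcol : ∀ y ∈ B, ∑ a, g a y = c) (hrow : ∀ a, ∑ y ∈ B, g a y = d) :
    #B * c = Fintype.card α * d :=
  calc (#B : ℝ) * c = ∑ y ∈ B, ∑ a, g a y := by rw [sum_congr rfl hcol, sum_const, nsmul_eq_mul]
    _ = ∑ a, ∑ y ∈ B, g a y := sum_comm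
    _ = Fintype.card α * d := by rw [sum_congr rfl fun a _ => hrow a, sum_const, card_univ,
        nsmul_eq_mul]

theorem div_eq_mul_div_sq_of_mul_eq {K : Type*} [Field K] {a b s t : K} (h : a * s = b * t) :
    a / s = b * (t / s ^ 2) := by
  rcases eq_or_ne s 0 with rfl | hs
  · simp
  · field_simp
    linear_combination h

theorem sum_mul_posterior_eq_sum_mul_sum_sq_posterior [Fintype α] (W : α → β → ℝ) (B : Finset β)
    (x : α) {s t : ℝ} (hs : ∀ y ∈ B, ∑ a, W a y = s) (ht : ∀ y ∈ B, ∑ a, W a y ^ 2 = t)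
    (hr : ∀ a, ∑ y ∈ B, W a y = ∑ y ∈ B, W x y)
    (hR : ∀ a, ∑ y ∈ B, W a y ^ 2 = ∑ y ∈ B, W x y ^ 2) :
    ∑ y ∈ B, W x y * (W x y / ∑ b, W b y) =
      ∑ y ∈ B, W x y * ∑ a, (W a y / ∑ b, W b y) ^ 2 := by
  have hcard : (Fintype.card α : ℝ) ≠ 0 := Nat.cast_ne_zero.2 (Fintype.card_pos_iff.2 ⟨x⟩).ne'
  have hsr := card_mul_eq_card_mul_of_sums_const W B hs hr
  have htR := card_mul_eq_card_mul_of_sums_const (fun a y => W a y ^ 2) B ht hR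
  have hRr : (∑ y ∈ B, W x y ^ 2) * s = (∑ y ∈ B, W x y) * t :=
    mul_left_cancel₀ hcard (by linear_combination t * hsr - s * htR)
  calc ∑ y ∈ B, W x y * (W x y / ∑ b, W b y)
      = (∑ y ∈ B, W x y ^ 2) / s := by
        rw [sum_div]
        exact sum_congr rfl fun y hy => by rw [hs y hy]; ring
    _ = (∑ y ∈ B, W x y) * (t / s ^ 2) := div_eq_mul_div_sq_of_mul_eq hRr
    _ = ∑ y ∈ B, W x y * ∑ a, (W a y / ∑ b, W b y) ^ 2 := by
        rw [sum_mul]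
        refine sum_congr rfl fun y hy => ?_
        simp_rw [div_pow, ← sum_div, ht y hy, hs y hy]

end WeaklySymmetricChannel

theorem stmt_7_general {α β ι : Type*} [Fintype α] [Fintype β]
    (W : α → β → ℝ)
    (part : β → ι)
    (hrowsym : ∀ (i : ι) (x x' : α), ∃ σ : {y : β // part y = i} ≃ {y : β // part y = i},
      ∀ y : {y : β // part y = i}, W x' (σ y : β) = W x (y : β))
    (hcolsym : ∀ (i : ι) (y y' : β), part y = i → part y' = i →
      ∃ σ : α ≃ α, ∀ x : α, W (σ x) y' = W x y)
    (x : α) :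
    ∑ y, W x y * (W x y / ∑ b, W b y) =
      ∑ y, W x y * ∑ a, (W a y / ∑ b, W b y) ^ 2 := by
  classical
  have hmaps : ∀ y ∈ (univ : Finset β), part y ∈ univ.image part :=
    fun y _ => mem_image_of_mem part (mem_univ y)
  rw [← sum_fiberwise_of_maps_to hmaps, ← sum_fiberwise_of_maps_to hmaps]
  refine sum_congr rfl fun i hi => ?_
  obtain ⟨y₀, -, rfl⟩ := mem_image.1 hi
  have hcolumn (f : ℝ → ℝ) (y : β) (hy : y ∈ ({y | part y = part y₀} : Finset β)) :
      ∑ a, f (W a y) = ∑ a, f (W a y₀) :=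
    have ⟨_, hσ⟩ := hcolsym _ y y₀ (mem_filter.1 hy).2 rfl
    sum_comp_eq_of_column_perm W f hσ
  have hrow (f : ℝ → ℝ) (a : α) :
      ∑ y with part y = part y₀, f (W a y) = ∑ y with part y = part y₀, f (W x y) :=
    have ⟨_, hσ⟩ := hrowsym _ x a
    sum_filter_comp_eq_of_row_perm W f part hσ
  exact sum_mul_posterior_eq_sum_mul_sum_sq_posterior W _ x (hcolumn id) (hcolumn (· ^ 2))
    (hrow id) (hrow (· ^ 2))

/-- For a weakly symmetric channel `W` with `q`-ary input (partition of the output alphabet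
given by `part : β → ι`, each submatrix having rows that are permutations of each other and
columns that are permutations of each other) and uniformly distributed input, for every input
`x` the expectation over `y ∼ W(·|x)` of `π_y(x)` equals that of `∑_a π_y(a)²`, where
`π_y(a) = W(y|a)/∑_b W(y|b)`. -/
theorem stmt_7 {α β ι : Type*} [Fintype α] [Fintype β] [Fintype ι]
    (W : α → β → ℝ) (hW0 : ∀ x y, 0 ≤ W x y) (hrow : ∀ x, ∑ y, W x y = 1)
    (hcol : ∀ y, 0 < ∑ x, W x y)
    (part : β → ι)
    (hrowsym : ∀ (i : ι) (x x' : α), ∃ σ : {y : β // part y = i} ≃ {y : β // part y = i},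
      ∀ y : {y : β // part y = i}, W x' (σ y : β) = W x (y : β))
    (hcolsym : ∀ (i : ι) (y y' : β), part y = i → part y' = i →
      ∃ σ : α ≃ α, ∀ x : α, W (σ x) y' = W x y)
    (x : α) :
    ∑ y, W x y * (W x y / ∑ b, W b y) =
      ∑ y, W x y * ∑ a, (W a y / ∑ b, W b y) ^ 2 :=
  stmt_7_general W part hrowsym hcolsym x
end
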